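/- Under the regularity setting, any sequence (ξ̂ₙ) of maximum likelihood estimators is strongly consistent for the Kullback–Leibler projection: almost surely, ξ̂ₙ → ξ* as n → ∞. -/

import Mathlib

open MeasureTheory ProbabilityTheory Filter

noncomputable section

/-- The regularity setting (R3)–(R8) for a statistical model `{f(·|ξ) : ξ ∈ Ξ}`
on countable data, with respect to the data-generating pmf `q`. -/
structure RegularModel (Y : Type) (q : Y → ℝ) (d : ℕ) where
  Xi : Set (EuclideanSpace ℝ (Fin d))
  Xi_open : IsOpen Xi
  Xi_nonempty : Xi.Nonempty
  f : Y → EuclideanSpace ℝ (Fin d) → ℝ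
  f_pos : ∀ y, ∀ ξ ∈ Xi, 0 < f y ξ
  f_pmf : ∀ ξ ∈ Xi, ∑' y, f y ξ = 1
  xistar : EuclideanSpace ℝ (Fin d)
  xistar_mem : xistar ∈ Xi
  /-- (R3): the Kullback–Leibler divergence is finite (summable) at `xistar`. -/
  R3_summable : Summable (fun y => q y * Real.log (q y / f y xistar))
  /-- (R3): `xistar` is the unique minimizer of the Kullback–Leibler divergence over `Xi`. -/
  R3_unique_min : ∀ ξ ∈ Xi, ξ ≠ xistar →
    ¬ Summable (fun y => q y * Real.log (q y / f y ξ)) ∨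
      (∑' y, q y * Real.log (q y / f y xistar)) < ∑' y, q y * Real.log (q y / f y ξ)
  /-- (R4): finite second moment of the log-likelihood ratio at `xistar`. -/
  R4 : Summable (fun y => q y * (Real.log (q y / f y xistar)) ^ 2)
  /-- gradient of the unit log-likelihood -/
  s : Y → EuclideanSpace ℝ (Fin d) → EuclideanSpace ℝ (Fin d)
  /-- Hessian of the unit log-likelihood -/
  H : Y → EuclideanSpace ℝ (Fin d) → EuclideanSpace ℝ (Fin d) →L[ℝ] EuclideanSpace ℝ (Fin d)
  /-- (R5): the unit log-likelihood has gradient `s` on `Xi`. -/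
  R5_grad : ∀ y, ∀ ξ ∈ Xi, HasGradientAt (fun ξ' => Real.log (f y ξ')) (s y ξ) ξ
  /-- (R5): the gradient has derivative (Hessian) `H` on `Xi`. -/
  R5_hess : ∀ y, ∀ ξ ∈ Xi, HasFDerivAt (s y) (H y ξ) ξ
  /-- (R5): the Hessian is continuous on `Xi`. -/
  R5_cont : ∀ y, ContinuousOn (H y) Xi
  /-- (R6) -/
  R6_log : Summable (fun y => q y * |Real.log (f y xistar)|)
  /-- (R6) -/
  R6_score : Summable (fun y => q y * ‖s y xistar‖ ^ 2)
  /-- radius of the ball `B` of (R7) -/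
  r : ℝ
  r_pos : 0 < r
  ball_subset : Metric.ball xistar r ⊆ Xi
  c : Y → ℝ
  c_nonneg : ∀ y, 0 ≤ c y
  c_summable : Summable (fun y => q y * c y)
  /-- (R7): domination of the Hessian on the ball `B`. -/
  R7_bound : ∀ y, ∀ ξ ∈ Metric.ball xistar r, ‖H y ξ‖ ≤ c y
  /-- (R8): connected upper level sets of all average log-likelihoods. -/
  R8 : ∀ (n : ℕ) (ys : Fin n → Y) (lam : ℝ),
    IsPreconnected {ξ | ξ ∈ Xi ∧ lam < (1 / (n : ℝ)) * ∑ i, Real.log (f (ys i) ξ)}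

/-- The ball `B` of assumption (R7). -/
def RegularModel.B {Y : Type} {q : Y → ℝ} {d : ℕ} (M : RegularModel Y q d) :
    Set (EuclideanSpace ℝ (Fin d)) :=
  Metric.ball M.xistar M.r

/-- `yseq` are i.i.d. random variables on `(Ω, P)` with common pmf `q`. -/
def IIDData {Ω Y : Type} [MeasurableSpace Ω] [MeasurableSpace Y]
    (P : Measure Ω) (yseq : ℕ → Ω → Y) (q : Y → ℝ) : Prop :=
  (∀ i, Measurable (yseq i)) ∧
    iIndepFun yseq P ∧
      ∀ i y, (P {ω | yseq i ω = y}).toReal = q y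

/-- The average log-likelihood based on the data `ys`. -/
def avgLogLik {Y : Type} {d : ℕ} (f : Y → EuclideanSpace ℝ (Fin d) → ℝ)
    (n : ℕ) (ys : Fin n → Y) (ξ : EuclideanSpace ℝ (Fin d)) : ℝ :=
  (1 / (n : ℝ)) * ∑ i, Real.log (f (ys i) ξ)

/-- `est` is a sequence of maximum-likelihood estimators: `est n` is a measurable,
`Ξ`-valued function of the first `n` observations which, almost surely, for all
sufficiently large `n`, globally maximizes the average log-likelihood over `Ξ`. -/
def IsMLESeq {Ω Y : Type} [MeasurableSpace Ω] [MeasurableSpace Y] {q : Y → ℝ} {d : ℕ}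
    (M : RegularModel Y q d) (P : Measure Ω) (yseq : ℕ → Ω → Y)
    (est : (n : ℕ) → (Fin n → Y) → EuclideanSpace ℝ (Fin d)) : Prop :=
  (∀ n, Measurable (est n)) ∧ (∀ n ys, est n ys ∈ M.Xi) ∧
    ∀ᵐ ω ∂P, ∃ N : ℕ, ∀ n ≥ N, ∀ ξ ∈ M.Xi,
      avgLogLik M.f n (fun i => yseq i ω) ξ ≤
        avgLogLik M.f n (fun i => yseq i ω) (est n (fun i => yseq i ω))

/-- A sequence of real random variables is bounded in probability. -/
def BoundedInProb {Ω : Type} [MeasurableSpace Ω] (P : Measure Ω) (R : ℕ → Ω → ℝ) : Prop :=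
  ∀ ε > (0 : ℝ), ∃ M > (0 : ℝ), ∃ N : ℕ, ∀ n ≥ N, (P {ω | M < |R n ω|}).toReal < ε

end

/-!
By the strong law of large numbers, almost surely the average log-likelihood `ℓ̄ₙ` converges to
the expected log-likelihood `L ξ = ∑ y, q y * log f(y|ξ)` at `ξ*` and at every point of a
countable dense subset of the ball `B`. By the mean value theorem and (R7), on `B` each
`ξ ↦ log f(y|ξ)` is Lipschitz with constant `‖s(y|ξ*)‖ + c(y) r`, whose mean is finite by (R6);
hence `ℓ̄ₙ` is eventually uniformly Lipschitz on `B` and converges uniformly on every sphere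
around `ξ*` inside `B`. By (R3), `L` has a strict maximum at `ξ*`, so eventually `ℓ̄ₙ < c < ℓ̄ₙ ξ*`
on such a sphere for some `c`. The superlevel set `{ℓ̄ₙ > c}` contains `ξ*` and the maximizer
`ξ̂ₙ`, is connected by (R8) and misses the sphere, so `ξ̂ₙ` lies inside the sphere.
-/

open Topology Metric

theorem IsCompact.exists_lt_forall_lt {X : Type*} [TopologicalSpace X] {K : Set X} {G : X → ℝ}
    {a : ℝ} (hK : IsCompact K) (hG : ContinuousOn G K) (hGK : ∀ ζ ∈ K, G ζ < a) :
    ∃ b < a, ∀ ζ ∈ K, G ζ < b := by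
  rcases K.eq_empty_or_nonempty with rfl | hne
  · exact ⟨a - 1, by linarith, by simp⟩
  obtain ⟨ζ₀, hζ₀, hmax⟩ := hK.exists_isMaxOn hne hG
  have := hGK ζ₀ hζ₀
  exact ⟨(G ζ₀ + a) / 2, by linarith, fun ζ hζ => by linarith [show G ζ ≤ G ζ₀ from hmax hζ]⟩

theorem IsCompact.exists_finite_net_in_dense {X : Type*} [PseudoMetricSpace X]
    {K U D : Set X} (hK : IsCompact K) (hU : IsOpen U) (hKU : K ⊆ U) (hD : Dense D) {η : ℝ}
    (hη : 0 < η) : ∃ t ⊆ D ∩ U, t.Finite ∧ ∀ ζ ∈ K, ∃ p ∈ t, dist ζ p < η := by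
  have hcover : K ⊆ ⋃ p ∈ D ∩ U, ball p η := fun ζ hζ => by
    obtain ⟨p, hp, hpD⟩ :=
      hD.inter_open_nonempty _ (isOpen_ball.inter hU) ⟨ζ, mem_ball_self hη, hKU hζ⟩
    exact Set.mem_biUnion ⟨hpD, hp.2⟩ (mem_ball_comm.1 hp.1)
  obtain ⟨t, htDU, ht, hKt⟩ := hK.elim_finite_subcover_image (fun _ _ => isOpen_ball) hcover
  exact ⟨t, htDU, ht, fun ζ hζ => by simpa using hKt hζ⟩

theorem eventually_forall_lt_of_tendsto_on_dense {X : Type*} [PseudoMetricSpace X]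
    {U K D : Set X} {g : ℕ → X → ℝ} {G : X → ℝ} {L : NNReal} {a : ℝ}
    (hU : IsOpen U) (hK : IsCompact K) (hKU : K ⊆ U) (hD : Dense D)
    (hg : ∀ᶠ n in atTop, LipschitzOnWith L (g n) U) (hG : LipschitzOnWith L G U)
    (hlim : ∀ p ∈ D ∩ U, Tendsto (fun n => g n p) atTop (𝓝 (G p)))
    (hGK : ∀ ζ ∈ K, G ζ < a) :
    ∀ᶠ n in atTop, ∀ ζ ∈ K, g n ζ < a := by
  obtain ⟨b, hba, hGb⟩ := hK.exists_lt_forall_lt (hG.continuousOn.mono hKU) hGK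
  set η := (a - b) / (4 * (L + 1))
  have hη : 0 < η := div_pos (by linarith) (by positivity)
  have hLη : (L : ℝ) * η ≤ (a - b) / 4 := by
    rw [mul_div_assoc', div_le_div_iff₀ (by positivity) (by norm_num)]
    nlinarith [L.coe_nonneg]
  obtain ⟨t, htDU, ht, hKt⟩ := hK.exists_finite_net_in_dense hU hKU hD hη
  have hlim_t : ∀ᶠ n in atTop, ∀ p ∈ t, g n p < G p + (a - b) / 2 :=
    ht.eventually_all.2 fun p hp => (hlim p (htDU hp)).eventually (gt_mem_nhds (by linarith))
  filter_upwards [hg, hlim_t] with n hgn hnt ζ hζ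
  obtain ⟨p, hpt, hζp⟩ := hKt ζ hζ
  have hpU := (htDU hpt).2
  have hgζ := (Real.sub_le_dist _ _).trans (hgn.dist_le_mul ζ (hKU hζ) p hpU)
  have hGp := (Real.sub_le_dist _ _).trans (hG.dist_le_mul p hpU ζ (hKU hζ))
  have hLζp : (L : ℝ) * dist ζ p ≤ (a - b) / 4 :=
    (mul_le_mul_of_nonneg_left hζp.le L.coe_nonneg).trans hLη
  rw [dist_comm] at hGp
  linarith [hnt p hpt, hGb ζ hζ]

theorem dist_lt_of_isPreconnected_superlevelSet {X : Type*} [PseudoMetricSpace X] {s : Set X}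
    {ℓ : X → ℝ} {c δ : ℝ} {x z : X} (hconn : IsPreconnected {ξ | ξ ∈ s ∧ c < ℓ ξ}) (hδ : 0 < δ)
    (hx : x ∈ s) (hcx : c < ℓ x) (hsphere : ∀ ζ ∈ sphere x δ, ℓ ζ ≤ c) (hz : z ∈ s)
    (hxz : ℓ x ≤ ℓ z) : dist z x < δ :=
  hconn.gt_of_ne (continuous_id.dist continuous_const).continuousOn
    (fun _ hw hwδ => (hsphere _ hwδ).not_gt hw.2) ⟨x, ⟨hx, hcx⟩, by simpa using hδ⟩
    ⟨hz, hcx.trans_le hxz⟩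

namespace IIDData

variable {Ω Y : Type} [MeasurableSpace Ω] [MeasurableSpace Y] {P : Measure Ω}
  {yseq : ℕ → Ω → Y} {q : Y → ℝ}

theorem nonneg (hiid : IIDData P yseq q) (y : Y) : 0 ≤ q y :=
  hiid.2.2 0 y ▸ ENNReal.toReal_nonneg

variable [Countable Y] [MeasurableSingletonClass Y]

theorem map_eq_sum_dirac [IsFiniteMeasure P] (hiid : IIDData P yseq q) (i : ℕ) :
    P.map (yseq i) = Measure.sum fun y => ENNReal.ofReal (q y) • Measure.dirac y := by
  rw [Measure.map_eq_sum P _ (hiid.1 i)]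
  congr! with y
  rw [← hiid.2.2 i y, ENNReal.ofReal_toReal (measure_ne_top _ _)]
  rfl

theorem identDistrib [IsFiniteMeasure P] (hiid : IIDData P yseq q) (i : ℕ) :
    IdentDistrib (yseq i) (yseq 0) P P where
  aemeasurable_fst := (hiid.1 i).aemeasurable
  aemeasurable_snd := (hiid.1 0).aemeasurable
  map_eq := by rw [hiid.map_eq_sum_dirac, hiid.map_eq_sum_dirac]

theorem integrable_comp [IsFiniteMeasure P] (hiid : IIDData P yseq q) {g : Y → ℝ}
    (hg : Summable fun y => q y * |g y|) : Integrable (fun ω => g (yseq 0 ω)) P := by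
  refine (integrable_map_measure (measurable_of_countable g).aestronglyMeasurable
    (hiid.1 0).aemeasurable).1 ?_
  rw [hiid.map_eq_sum_dirac]
  exact integrable_sum_dirac (fun _ => ENNReal.ofReal_ne_top)
    (by simpa [ENNReal.toReal_ofReal (hiid.nonneg _)] using hg)

theorem integral_comp [IsFiniteMeasure P] (hiid : IIDData P yseq q) (g : Y → ℝ) :
    ∫ ω, g (yseq 0 ω) ∂P = ∑' y, q y * g y := by
  rw [← integral_map (hiid.1 0).aemeasurable (measurable_of_countable g).aestronglyMeasurable,
    hiid.map_eq_sum_dirac, integral_sum_dirac (fun _ => ENNReal.ofReal_ne_top)]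
  simp [ENNReal.toReal_ofReal (hiid.nonneg _)]

theorem ae_tendsto_avg [IsProbabilityMeasure P] (hiid : IIDData P yseq q) {g : Y → ℝ}
    (hg : Summable fun y => q y * |g y|) :
    ∀ᵐ ω ∂P, Tendsto (fun n : ℕ => 1 / (n : ℝ) * ∑ i : Fin n, g (yseq i ω)) atTop
      (𝓝 (∑' y, q y * g y)) := by
  have hg_meas := measurable_of_countable g
  have := strong_law_ae_real (fun i ω => g (yseq i ω)) (hiid.integrable_comp hg)
    (fun i j hij => (hiid.2.1.indepFun hij).comp hg_meas hg_meas)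
    (fun i => (hiid.identDistrib i).comp hg_meas)
  filter_upwards [this] with ω hω
  rw [← hiid.integral_comp g]
  refine hω.congr fun n => ?_
  rw [Fin.sum_univ_eq_sum_range (fun i => g (yseq i ω)), one_div, inv_mul_eq_div]

end IIDData

namespace RegularModel

variable {Y : Type} {q : Y → ℝ} {d : ℕ} (M : RegularModel Y q d)

noncomputable def lipBound (y : Y) : ℝ :=
  ‖M.s y M.xistar‖ + M.c y * M.r

noncomputable def loglik (ξ : EuclideanSpace ℝ (Fin d)) : ℝ :=
  ∑' y, q y * Real.log (M.f y ξ)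

theorem lipBound_nonneg (y : Y) : 0 ≤ M.lipBound y :=
  add_nonneg (norm_nonneg _) (mul_nonneg (M.c_nonneg y) M.r_pos.le)

theorem xistar_mem_B : M.xistar ∈ M.B :=
  mem_ball_self M.r_pos

theorem norm_s_le_lipBound (y : Y) {ξ : EuclideanSpace ℝ (Fin d)} (hξ : ξ ∈ M.B) :
    ‖M.s y ξ‖ ≤ M.lipBound y := by
  have hmvt := (convex_ball M.xistar M.r).norm_image_sub_le_of_norm_hasFDerivWithin_le
    (fun x hx => (M.R5_hess y x (M.ball_subset hx)).hasFDerivWithinAt)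
    (fun x hx => M.R7_bound y x hx) M.xistar_mem_B hξ
  have hdist : ‖ξ - M.xistar‖ ≤ M.r := (mem_ball_iff_norm.1 hξ).le
  have := mul_le_mul_of_nonneg_left hdist (M.c_nonneg y)
  have := norm_sub_norm_le (M.s y ξ) (M.s y M.xistar)
  unfold lipBound
  linarith

theorem dist_log_f_le (y : Y) {ξ ξ' : EuclideanSpace ℝ (Fin d)} (hξ : ξ ∈ M.B)
    (hξ' : ξ' ∈ M.B) :
    dist (Real.log (M.f y ξ)) (Real.log (M.f y ξ')) ≤ M.lipBound y * dist ξ ξ' := by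
  simpa [dist_eq_norm] using
    (convex_ball M.xistar M.r).norm_image_sub_le_of_norm_hasFDerivWithin_le
      (f' := fun x => InnerProductSpace.toDual ℝ _ (M.s y x))
      (fun x hx => (M.R5_grad y x (M.ball_subset hx)).hasFDerivAt.hasFDerivWithinAt)
      (fun x hx => by simpa using M.norm_s_le_lipBound y hx) hξ' hξ

theorem summable_lipBound (hq : ∀ y, 0 ≤ q y) (hqs : Summable q) :
    Summable fun y => q y * M.lipBound y := by
  -- `t ≤ 1 + t ^ 2` turns the second moment of the score at `ξ*` into a first moment
  have hs : Summable fun y => q y * ‖M.s y M.xistar‖ :=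
    (hqs.add M.R6_score).of_nonneg_of_le (fun y => mul_nonneg (hq y) (norm_nonneg _))
      fun y => by nlinarith [mul_nonneg (hq y) (norm_nonneg (M.s y M.xistar)),
        mul_nonneg (hq y) (sq_nonneg (‖M.s y M.xistar‖ - 1))]
  simpa [lipBound, mul_add, mul_assoc] using hs.add (M.c_summable.mul_right M.r)

theorem summable_abs_log_f (hq : ∀ y, 0 ≤ q y) (hqs : Summable q)
    {ξ : EuclideanSpace ℝ (Fin d)} (hξ : ξ ∈ M.B) :
    Summable fun y => q y * |Real.log (M.f y ξ)| := by
  refine (M.R6_log.add ((M.summable_lipBound hq hqs).mul_right M.r)).of_nonneg_of_le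
    (fun y => mul_nonneg (hq y) (abs_nonneg _)) fun y => ?_
  have hlip := M.dist_log_f_le y hξ M.xistar_mem_B
  have hdist : dist ξ M.xistar ≤ M.r := (mem_ball.1 hξ).le
  have := mul_le_mul_of_nonneg_left hdist (M.lipBound_nonneg y)
  have := abs_sub_abs_le_abs_sub (Real.log (M.f y ξ)) (Real.log (M.f y M.xistar))
  rw [Real.dist_eq] at hlip
  rw [mul_assoc, ← mul_add]
  exact mul_le_mul_of_nonneg_left (by linarith) (hq y)

theorem summable_log_f (hq : ∀ y, 0 ≤ q y) (hqs : Summable q)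
    {ξ : EuclideanSpace ℝ (Fin d)} (hξ : ξ ∈ M.B) :
    Summable fun y => q y * Real.log (M.f y ξ) :=
  (M.summable_abs_log_f hq hqs hξ).of_norm_bounded fun y => by
    rw [Real.norm_eq_abs, abs_mul, abs_of_nonneg (hq y)]

theorem lipschitzOnWith_loglik (hq : ∀ y, 0 ≤ q y) (hqs : Summable q) :
    LipschitzOnWith (∑' y, q y * M.lipBound y).toNNReal M.loglik M.B := by
  refine LipschitzOnWith.of_dist_le' fun ξ hξ ξ' hξ' => ?_
  rw [dist_eq_norm, loglik, loglik,
    ← (M.summable_log_f hq hqs hξ).tsum_sub (M.summable_log_f hq hqs hξ'), ← tsum_mul_right]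
  refine tsum_of_norm_bounded ((M.summable_lipBound hq hqs).mul_right _).hasSum fun y => ?_
  rw [← mul_sub, norm_mul, Real.norm_of_nonneg (hq y), mul_assoc, ← dist_eq_norm]
  exact mul_le_mul_of_nonneg_left (M.dist_log_f_le y hξ hξ') (hq y)

theorem loglik_lt_loglik_xistar (hq : ∀ y, 0 < q y) (hqs : Summable q)
    {ξ : EuclideanSpace ℝ (Fin d)} (hξ : ξ ∈ M.B) (hne : ξ ≠ M.xistar) :
    M.loglik ξ < M.loglik M.xistar := by
  have hq0 : ∀ y, 0 ≤ q y := fun y => (hq y).le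
  have hKL : ∀ ζ ∈ M.Xi, (fun y => q y * Real.log (q y / M.f y ζ)) =
      fun y => q y * Real.log (q y) - q y * Real.log (M.f y ζ) := fun ζ hζ => funext fun y => by
    rw [Real.log_div (hq y).ne' (M.f_pos y ζ hζ).ne', mul_sub]
  have hstar := M.summable_log_f hq0 hqs M.xistar_mem_B
  have hξs := M.summable_log_f hq0 hqs hξ
  have hent : Summable fun y => q y * Real.log (q y) :=
    ((hKL _ M.xistar_mem ▸ M.R3_summable).add hstar).congr fun y => sub_add_cancel _ _
  rcases M.R3_unique_min ξ (M.ball_subset hξ) hne with h | h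
  · exact absurd (hKL ξ (M.ball_subset hξ) ▸ hent.sub hξs) h
  · rw [hKL _ M.xistar_mem, hKL _ (M.ball_subset hξ), hent.tsum_sub hstar,
      hent.tsum_sub hξs] at h
    unfold loglik
    linarith

theorem lipschitzOnWith_avgLogLik (n : ℕ) (z : Fin n → Y) {L : ℝ}
    (hL : 1 / (n : ℝ) * ∑ i, M.lipBound (z i) ≤ L) :
    LipschitzOnWith L.toNNReal (avgLogLik M.f n z) M.B := by
  refine LipschitzOnWith.of_dist_le' fun ξ hξ ξ' hξ' => ?_
  calc dist (avgLogLik M.f n z ξ) (avgLogLik M.f n z ξ')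
      = 1 / (n : ℝ) * |∑ i, (Real.log (M.f (z i) ξ) - Real.log (M.f (z i) ξ'))| := by
        rw [Real.dist_eq, avgLogLik, avgLogLik, ← mul_sub, ← Finset.sum_sub_distrib, abs_mul,
          abs_of_nonneg (by positivity)]
    _ ≤ 1 / (n : ℝ) * ∑ i, M.lipBound (z i) * dist ξ ξ' := by
        gcongr
        exact (Finset.abs_sum_le_sum_abs _ _).trans
          (Finset.sum_le_sum fun i _ => M.dist_log_f_le (z i) hξ hξ')
    _ ≤ L * dist ξ ξ' := by
        rw [← Finset.sum_mul, ← mul_assoc]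
        exact mul_le_mul_of_nonneg_right hL dist_nonneg

theorem tendsto_xistar_of_tendsto_avgLogLik (hq : ∀ y, 0 < q y) (hqs : Summable q)
    {D : Set (EuclideanSpace ℝ (Fin d))} (hD : Dense D) {z : ℕ → Y}
    {θ : ℕ → EuclideanSpace ℝ (Fin d)} (hθ : ∀ n, θ n ∈ M.Xi)
    (hmle : ∀ᶠ n in atTop, ∀ ξ ∈ M.Xi,
      avgLogLik M.f n (fun i => z i) ξ ≤ avgLogLik M.f n (fun i => z i) (θ n))
    (hlip : Tendsto (fun n : ℕ => 1 / (n : ℝ) * ∑ i : Fin n, M.lipBound (z i)) atTop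
      (𝓝 (∑' y, q y * M.lipBound y)))
    (hstar : Tendsto (fun n => avgLogLik M.f n (fun i => z i) M.xistar) atTop
      (𝓝 (M.loglik M.xistar)))
    (hdense : ∀ p ∈ D ∩ M.B, Tendsto (fun n => avgLogLik M.f n (fun i => z i) p) atTop
      (𝓝 (M.loglik p))) :
    Tendsto θ atTop (𝓝 M.xistar) := by
  have hq0 : ∀ y, 0 ≤ q y := fun y => (hq y).le
  set Λ := ∑' y, q y * M.lipBound y
  have hΛ : 0 ≤ Λ := tsum_nonneg fun y => mul_nonneg (hq0 y) (M.lipBound_nonneg y)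
  have hLipn : ∀ᶠ n in atTop,
      LipschitzOnWith (Λ + 1).toNNReal (avgLogLik M.f n fun i => z i) M.B :=
    (hlip.eventually (gt_mem_nhds (lt_add_one Λ))).mono fun n hn =>
      M.lipschitzOnWith_avgLogLik n _ hn.le
  have hLip : LipschitzOnWith (Λ + 1).toNNReal M.loglik M.B :=
    (M.lipschitzOnWith_loglik hq0 hqs).weaken (Real.toNNReal_le_toNNReal (by linarith))
  refine nhds_basis_ball.tendsto_right_iff.2 fun ε hε => ?_
  set δ := min ε (M.r / 2)
  have hδ : 0 < δ := lt_min hε (half_pos M.r_pos)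
  have hSB : sphere M.xistar δ ⊆ M.B :=
    sphere_subset_ball ((min_le_right _ _).trans_lt (half_lt_self M.r_pos))
  obtain ⟨c, hc, hSc⟩ := (isCompact_sphere M.xistar δ).exists_lt_forall_lt
    (hLip.continuousOn.mono hSB) fun ζ hζ =>
      M.loglik_lt_loglik_xistar hq hqs (hSB hζ) (ne_of_mem_sphere hζ hδ.ne')
  filter_upwards [eventually_forall_lt_of_tendsto_on_dense isOpen_ball (isCompact_sphere _ _)
    hSB hD hLipn hLip hdense hSc, hstar.eventually (lt_mem_nhds hc), hmle]
    with n hSn hcn hmlen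
  exact ball_subset_ball (min_le_left _ _) <| dist_lt_of_isPreconnected_superlevelSet
    (M.R8 n _ c) hδ M.xistar_mem hcn (fun ζ hζ => (hSn ζ hζ).le) (hθ n)
    (hmlen _ M.xistar_mem)

end RegularModel

/-- under the regularity setting, any sequence of maximum likelihood
estimators converges almost surely to the Kullback–Leibler projection `ξ*`. -/
theorem mle_strong_consistency
    {Y Ω : Type} [Countable Y] [MeasurableSpace Y] [MeasurableSingletonClass Y]
    [MeasurableSpace Ω] {d : ℕ} {q : Y → ℝ}
    (P : MeasureTheory.Measure Ω) [MeasureTheory.IsProbabilityMeasure P]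
    (yseq : ℕ → Ω → Y)
    (hq_pos : ∀ y, 0 < q y) (hq_pmf : ∑' y, q y = 1)
    (hiid : IIDData P yseq q)
    (M : RegularModel Y q d)
    (est : (n : ℕ) → (Fin n → Y) → EuclideanSpace ℝ (Fin d))
    (hest : IsMLESeq M P yseq est) :
    ∀ᵐ ω ∂P, Filter.Tendsto (fun n => est n (fun i : Fin n => yseq i ω))
      Filter.atTop (nhds M.xistar) := by
  have hq0 : ∀ y, 0 ≤ q y := fun y => (hq_pos y).le
  have hqs : Summable q := by
    by_contra h
    simp [tsum_eq_zero_of_not_summable h] at hq_pmf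
  obtain ⟨D, hDc, hD⟩ := TopologicalSpace.exists_countable_dense (EuclideanSpace ℝ (Fin d))
  have hlip := hiid.ae_tendsto_avg (g := M.lipBound) <|
    (M.summable_lipBound hq0 hqs).congr fun y => by rw [abs_of_nonneg (M.lipBound_nonneg y)]
  have hstar := hiid.ae_tendsto_avg (M.summable_abs_log_f hq0 hqs M.xistar_mem_B)
  have hdense := (ae_ball_iff (hDc.mono Set.inter_subset_left)).2 fun p hp =>
    hiid.ae_tendsto_avg (M.summable_abs_log_f hq0 hqs hp.2)
  filter_upwards [hest.2.2, hlip, hstar, hdense] with ω ⟨N, hN⟩ hlipω hstarω hdenseω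
  exact M.tendsto_xistar_of_tendsto_avgLogLik (z := fun i => yseq i ω) hq_pos hqs hD
    (fun n => hest.2.1 n _) (eventually_atTop.2 ⟨N, hN⟩) hlipω hstarω hdenseω
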